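/- arXiv:1403.4457 — 2 statements merged into one kernel-verified Lean document; each statement's English description precedes it below -/
import Mathlib

section
/- Consider model (6) (m₂₁ = m₃₁ = m₂₃ = 0) with all remaining parameters positive and r₃ > m₁₃. Define β = (k₃/r₃)(r₃ − m₁₃) and α = (k₁/2)(1 + sqrt(1 + 4m₁₃k₃(r₃ − m₁₃)/(r₁r₃k₁))). Then (α, 0, β) is an equilibrium with α, β > 0, and the Jacobian there has eigenvalues J₁₁ = −(r₁/k₁)α − m₁₃β/α < 0, J₂₂ = r₂ − m₁₂ − m₃₂, J₃₃ = −(r₃/k₃)β < 0; hence (α,0,β) is locally asymptotically stable if and only if r₂ < m₁₂ + m₃₂. -/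
/-!
At `I₃` the second population is extinct, and `P₃` then obeys the logistic law with outflow
`m₁₃`, so `β` is its positive root; `P₁` obeys the logistic law with constant inflow `m₁₃ β`,
and `α` is the positive root of the resulting quadratic. The Jacobian becomes upper triangular
after ordering the populations as `P₁, P₃, P₂`, so its eigenvalues are its diagonal entries.
Differentiating `r x (1 - x / k) + c` at a zero `x` and eliminating `c` shows that the first
and third of them are negative, so stability is decided by the sign of `r₂ - m₁₂ - m₃₂`.
-/

namespace Matrix

open Polynomial

variable {n K α : Type*} [Fintype n] [DecidableEq n] [LinearOrder α] {b : n → α}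

theorem BlockTriangular.charpoly_of_injective [CommRing K] {M : Matrix n n K}
    (hM : M.BlockTriangular b) (hb : Function.Injective b) :
    M.charpoly = ∏ i, (X - C (M i i)) :=
  letI : LinearOrder n := LinearOrder.lift' b hb
  charpoly_of_isUpperTriangular M hM

theorem BlockTriangular.spectrum_eq_range_diag [Field K] {M : Matrix n n K}
    (hM : M.BlockTriangular b) (hb : Function.Injective b) :
    spectrum K M = Set.range M.diag := by
  ext μ
  simp only [mem_spectrum_iff_isRoot_charpoly, hM.charpoly_of_injective hb, IsRoot.def,
    eval_prod, eval_sub, eval_X, eval_C, Finset.prod_eq_zero_iff, Finset.mem_univ, true_and,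
    sub_eq_zero, Set.mem_range, diag_apply]
  exact exists_congr fun _ ↦ eq_comm

theorem BlockTriangular.forall_spectrum_re_neg_iff {M : Matrix n n ℝ}
    (hM : M.BlockTriangular b) (hb : Function.Injective b) :
    (∀ μ ∈ spectrum ℂ (M.map Complex.ofReal), μ.re < 0) ↔ ∀ i, M i i < 0 := by
  have hM' : (M.map Complex.ofReal).BlockTriangular b := hM.map Complex.ofRealHom
  rw [hM'.spectrum_eq_range_diag hb]
  simp

end Matrix

theorem logistic_add_inflow_eq_zero {r k c x : ℝ} (hr : 0 < r) (hk : 0 < k) (hc : 0 ≤ c)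
    (hx : x = k / 2 * (1 + √(1 + 4 * c / (r * k)))) :
    r * x * (1 - x / k) + c = 0 := by
  have hs : √(1 + 4 * c / (r * k)) ^ 2 = 1 + 4 * c / (r * k) := Real.sq_sqrt (by positivity)
  generalize √(1 + 4 * c / (r * k)) = s at hx hs
  subst hx
  field_simp at hs ⊢
  linear_combination -hs

theorem logistic_deriv_eq_of_add_inflow_eq_zero {r k c x : ℝ}
    (hx : r * x * (1 - x / k) + c = 0) (hx₀ : x ≠ 0) :
    r - 2 * r * x / k = -(r / k) * x - c / x := by
  field_simp
  linear_combination hx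

theorem logistic_sub_outflow_eq_zero {r k m x : ℝ} (hx : x = k / r * (r - m)) :
    r * x * (1 - x / k) - m * x = 0 := by
  rcases eq_or_ne r 0 with rfl | hr
  · simp [hx]
  rcases eq_or_ne k 0 with rfl | hk
  · simp [hx]
  rw [hx]
  field_simp
  ring

theorem logistic_deriv_sub_outflow_eq_of_eq_zero {r k m x : ℝ}
    (hx : r * x * (1 - x / k) - m * x = 0) (hx₀ : x ≠ 0) :
    r - 2 * r * x / k - m = -(r / k) * x := by
  have hpc : r - r * x / k - m = 0 :=
    (mul_eq_zero.1 (by linear_combination hx : x * (r - r * x / k - m) = 0)).resolve_left hx₀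
  linear_combination hpc

open Matrix in
theorem model6_I3_equilibrium_stability_general
    (r₁ r₂ r₃ k₁ k₂ k₃ m₁₂ m₁₃ m₃₂ : ℝ)
    (hr₁ : 0 < r₁) (hr₃ : 0 < r₃)
    (hk₁ : 0 < k₁) (hk₃ : 0 < k₃)
    (hm₁₃ : 0 < m₁₃)
    (hfeas : m₁₃ < r₃)
    (α β : ℝ)
    (hβ : β = (k₃ / r₃) * (r₃ - m₁₃))
    (hα : α = (k₁ / 2) *
      (1 + Real.sqrt (1 + 4 * m₁₃ * k₃ * (r₃ - m₁₃) / (r₁ * r₃ * k₁))))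
    (J : Matrix (Fin 3) (Fin 3) ℝ)
    (hJ : J = !![r₁ - 2 * r₁ * α / k₁, m₁₂, m₁₃;
                 0, r₂ - (m₃₂ + m₁₂), 0;
                 0, m₃₂, r₃ - 2 * r₃ * β / k₃ - m₁₃]) :
    0 < α ∧ 0 < β ∧
    (r₁ * α * (1 - α / k₁) + m₁₂ * 0 + m₁₃ * β = 0 ∧
     r₂ * 0 * (1 - 0 / k₂) - (m₃₂ + m₁₂) * 0 = 0 ∧
     r₃ * β * (1 - β / k₃) + m₃₂ * 0 - m₁₃ * β = 0) ∧
    J 0 0 = -(r₁ / k₁) * α - m₁₃ * β / α ∧ J 0 0 < 0 ∧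
    J 1 1 = r₂ - m₁₂ - m₃₂ ∧
    J 2 2 = -(r₃ / k₃) * β ∧ J 2 2 < 0 ∧
    ((∀ μ ∈ spectrum ℂ (J.map (Complex.ofReal)), μ.re < 0) ↔
      r₂ < m₁₂ + m₃₂) := by
  have hβ₀ : 0 < β := by rw [hβ]; have := sub_pos.2 hfeas; positivity
  have hα₀ : 0 < α := by rw [hα]; positivity
  have hα' : α = k₁ / 2 * (1 + √(1 + 4 * (m₁₃ * β) / (r₁ * k₁))) := by
    rw [hα, hβ]; field_simp
  have heq₁ := logistic_add_inflow_eq_zero hr₁ hk₁ (by positivity) hα'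
  have heq₃ := logistic_sub_outflow_eq_zero hβ
  have hJ₀₀ : J 0 0 = -(r₁ / k₁) * α - m₁₃ * β / α := by
    rw [hJ]; exact logistic_deriv_eq_of_add_inflow_eq_zero heq₁ hα₀.ne'
  have hJ₂₂ : J 2 2 = -(r₃ / k₃) * β := by
    rw [hJ]; exact logistic_deriv_sub_outflow_eq_of_eq_zero heq₃ hβ₀.ne'
  have hJ₀₀_neg : J 0 0 < 0 := by
    rw [hJ₀₀, neg_mul, neg_sub_left, neg_lt_zero]; positivity
  have hJ₂₂_neg : J 2 2 < 0 := by
    rw [hJ₂₂, neg_mul, neg_lt_zero]; positivity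
  have hJ_tri : J.BlockTriangular ![0, 2, 1] := by
    intro i j hij; subst hJ; fin_cases i <;> fin_cases j <;> simp_all
  have hJ₁₁ : J 1 1 = r₂ - m₁₂ - m₃₂ := by rw [hJ]; simp only [of_apply, cons_val]; ring
  refine ⟨hα₀, hβ₀, ⟨by simpa using heq₁, by ring, by simpa using heq₃⟩, hJ₀₀, hJ₀₀_neg,
    hJ₁₁, hJ₂₂, hJ₂₂_neg, ?_⟩
  rw [hJ_tri.forall_spectrum_re_neg_iff (by decide), Fin.forall_fin_succ, Fin.forall_fin_two]
  simp only [Fin.succ_zero_eq_one, Fin.succ_one_eq_two, hJ₀₀_neg, hJ₁₁, hJ₂₂_neg, true_and,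
    and_true, sub_sub, sub_neg]

open Matrix in
/-- Model (6): `I₃ = (α, 0, β)` is an equilibrium with positive components,
the Jacobian there has eigenvalues `−(r₁/k₁)α − m₁₃β/α < 0`,
`r₂ − m₁₂ − m₃₂`, `−(r₃/k₃)β < 0`; hence `I₃` is locally asymptotically
stable iff `r₂ < m₁₂ + m₃₂`. -/
theorem model6_I3_equilibrium_stability
    (r₁ r₂ r₃ k₁ k₂ k₃ m₁₂ m₁₃ m₃₂ : ℝ)
    (hr₁ : 0 < r₁) (hr₂ : 0 < r₂) (hr₃ : 0 < r₃)
    (hk₁ : 0 < k₁) (hk₂ : 0 < k₂) (hk₃ : 0 < k₃)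
    (hm₁₂ : 0 < m₁₂) (hm₁₃ : 0 < m₁₃) (hm₃₂ : 0 < m₃₂)
    (hfeas : m₁₃ < r₃)
    (α β : ℝ)
    (hβ : β = (k₃ / r₃) * (r₃ - m₁₃))
    (hα : α = (k₁ / 2) *
      (1 + Real.sqrt (1 + 4 * m₁₃ * k₃ * (r₃ - m₁₃) / (r₁ * r₃ * k₁))))
    (J : Matrix (Fin 3) (Fin 3) ℝ)
    (hJ : J = !![r₁ - 2 * r₁ * α / k₁, m₁₂, m₁₃;
                 0, r₂ - (m₃₂ + m₁₂), 0;
                 0, m₃₂, r₃ - 2 * r₃ * β / k₃ - m₁₃]) :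
    0 < α ∧ 0 < β ∧
    (r₁ * α * (1 - α / k₁) + m₁₂ * 0 + m₁₃ * β = 0 ∧
     r₂ * 0 * (1 - 0 / k₂) - (m₃₂ + m₁₂) * 0 = 0 ∧
     r₃ * β * (1 - β / k₃) + m₃₂ * 0 - m₁₃ * β = 0) ∧
    J 0 0 = -(r₁ / k₁) * α - m₁₃ * β / α ∧ J 0 0 < 0 ∧
    J 1 1 = r₂ - m₁₂ - m₃₂ ∧
    J 2 2 = -(r₃ / k₃) * β ∧ J 2 2 < 0 ∧
    ((∀ μ ∈ spectrum ℂ (J.map (Complex.ofReal)), μ.re < 0) ↔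
      r₂ < m₁₂ + m₃₂) :=
  model6_I3_equilibrium_stability_general r₁ r₂ r₃ k₁ k₂ k₃ m₁₂ m₁₃ m₃₂ hr₁ hr₃ hk₁ hk₃ hm₁₃ hfeas α
    β hβ hα J hJ
end

section
/- Let r₁, r₂, r₃, k₁, k₂, k₃, m₂₁, m₃₂ > 0 with r₁ > m₂₁. Define P₁* = (k₁/r₁)(r₁ − m₂₁), P₂* = (k₂/(2r₂))[r₂ − m₃₂ + sqrt((r₂ − m₃₂)² + (4/k₂)r₂m₂₁P₁*)], P₃* = (k₃/(2r₃))[r₃ + sqrt(r₃² + (4/k₃)r₃m₃₂P₂*)]. Then P₁*, P₂*, P₃* > 0 and (P₁*, P₂*, P₃*) is an equilibrium of the system P₁' = r₁P₁(1 − P₁/k₁) − m₂₁P₁, P₂' = r₂P₂(1 − P₂/k₂) − m₃₂P₂ + m₂₁P₁, P₃' = r₃P₃(1 − P₃/k₃) + m₃₂P₂. -/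
/-!
Each patch sits at an equilibrium of logistic growth with constant emigration rate `m` and a
constant inflow `c` from the patch upstream. Such an equilibrium solves the quadratic
`(r / k) P² - (r - m) P - c = 0`, and for `c > 0` its larger root is strictly positive
whatever the sign of `r - m`. Patch 1 has no inflow, so its equilibrium is linear and needs
`m₂₁ < r₁`; its positive population then feeds patch 2, which feeds patch 3 (with no emigration).
-/

open Real

/-- The larger root of `r P (1 - P / k) - m P + c = 0`. -/
noncomputable def logisticMigrationRoot (r k m c : ℝ) : ℝ :=
  k / (2 * r) * (r - m + √((r - m) ^ 2 + 4 / k * r * c))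

theorem logistic_emigration_equilibrium {r k m : ℝ} (hr : r ≠ 0) (hk : k ≠ 0) :
    r * (k / r * (r - m)) * (1 - k / r * (r - m) / k) - m * (k / r * (r - m)) = 0 := by
  field_simp
  ring

theorem logisticMigrationRoot_isRoot {r k m c : ℝ} (hr : r ≠ 0) (hk : k ≠ 0)
    (hD : 0 ≤ (r - m) ^ 2 + 4 / k * r * c) :
    r * logisticMigrationRoot r k m c * (1 - logisticMigrationRoot r k m c / k)
      - m * logisticMigrationRoot r k m c + c = 0 := by
  have hs := sq_sqrt hD
  rw [logisticMigrationRoot]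
  field_simp at hs ⊢
  linear_combination -hs

theorem logisticMigrationRoot_pos {r k m c : ℝ} (hr : 0 < r) (hk : 0 < k) (hc : 0 < c) :
    0 < logisticMigrationRoot r k m c := by
  have hD : (r - m) ^ 2 < (r - m) ^ 2 + 4 / k * r * c := by
    have : 0 < 4 / k * r * c := by positivity
    linarith
  have hsqrt : m - r < √((r - m) ^ 2 + 4 / k * r * c) :=
    calc m - r ≤ |r - m| := by rw [abs_sub_comm]; exact le_abs_self _
      _ = √((r - m) ^ 2) := (sqrt_sq_eq_abs _).symm
      _ < √((r - m) ^ 2 + 4 / k * r * c) := sqrt_lt_sqrt (sq_nonneg _) hD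
  have : 0 < r - m + √((r - m) ^ 2 + 4 / k * r * c) := by linarith
  unfold logisticMigrationRoot
  positivity

/-- Model (n1) (chain `P₁ → P₂ → P₃`): the explicit triple is a strictly
positive coexistence equilibrium under the single condition `r₁ > m₂₁`. -/
theorem modeln1_coexistence_equilibrium
    (r₁ r₂ r₃ k₁ k₂ k₃ m₂₁ m₃₂ : ℝ)
    (hr₁ : 0 < r₁) (hr₂ : 0 < r₂) (hr₃ : 0 < r₃)
    (hk₁ : 0 < k₁) (hk₂ : 0 < k₂) (hk₃ : 0 < k₃)
    (hm₂₁ : 0 < m₂₁) (hm₃₂ : 0 < m₃₂)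
    (hfeas : m₂₁ < r₁)
    (P₁ P₂ P₃ : ℝ)
    (hP₁ : P₁ = (k₁ / r₁) * (r₁ - m₂₁))
    (hP₂ : P₂ = (k₂ / (2 * r₂)) *
      (r₂ - m₃₂ + Real.sqrt ((r₂ - m₃₂) ^ 2 + (4 / k₂) * r₂ * m₂₁ * P₁)))
    (hP₃ : P₃ = (k₃ / (2 * r₃)) *
      (r₃ + Real.sqrt (r₃ ^ 2 + (4 / k₃) * r₃ * m₃₂ * P₂))) :
    0 < P₁ ∧ 0 < P₂ ∧ 0 < P₃ ∧
    r₁ * P₁ * (1 - P₁ / k₁) - m₂₁ * P₁ = 0 ∧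
    r₂ * P₂ * (1 - P₂ / k₂) - m₃₂ * P₂ + m₂₁ * P₁ = 0 ∧
    r₃ * P₃ * (1 - P₃ / k₃) + m₃₂ * P₂ = 0 := by
  have hP₁pos : 0 < P₁ := by
    rw [hP₁]
    have : 0 < r₁ - m₂₁ := sub_pos.mpr hfeas
    positivity
  have hP₂root : P₂ = logisticMigrationRoot r₂ k₂ m₃₂ (m₂₁ * P₁) := by
    simp only [hP₂, logisticMigrationRoot, mul_assoc]
  have hP₂pos : 0 < P₂ := hP₂root ▸ logisticMigrationRoot_pos hr₂ hk₂ (by positivity)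
  have hP₃root : P₃ = logisticMigrationRoot r₃ k₃ 0 (m₃₂ * P₂) := by
    simp only [hP₃, logisticMigrationRoot, sub_zero, mul_assoc]
  have hP₃pos : 0 < P₃ := hP₃root ▸ logisticMigrationRoot_pos hr₃ hk₃ (by positivity)
  refine ⟨hP₁pos, hP₂pos, hP₃pos, ?_, ?_, ?_⟩
  · exact hP₁ ▸ logistic_emigration_equilibrium hr₁.ne' hk₁.ne'
  · exact hP₂root ▸ logisticMigrationRoot_isRoot hr₂.ne' hk₂.ne' (by positivity)
  · have := logisticMigrationRoot_isRoot (m := 0) (c := m₃₂ * P₂) hr₃.ne' hk₃.ne' (by positivity)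
    rwa [← hP₃root, zero_mul, sub_zero] at this
end
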